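/- Let T : K[[x]] → K[[x]] be a non-expansive K-linear endomorphism and q ∈ K[[x]], y₀ ∈ K. Then the unique solution of the IVP D_h(y) = T(y) + q, y(0) = y₀, is y = (Σ_{n≥0} (I_h ∘ T)ⁿ)(y₀ + I_h(q)), where the operator series converges in the operator ultrametric. -/

import Mathlib

open PowerSeries Classical Finset

/-- The Ward `h`-derivative: `D_h(Σ sₖxᵏ) = Σ_{k≥1} hₖ sₖ x^{k-1}`. -/
noncomputable def Dh {K : Type*} [Field K] (h s : PowerSeries K) : PowerSeries K :=
  PowerSeries.mk fun k =>
    PowerSeries.coeff (k + 1) h * PowerSeries.coeff (k + 1) s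

/-- The Ward `h`-integral: `I_h(Σ sₖxᵏ) = Σ_{k≥0} (sₖ/h_{k+1}) x^{k+1}`. -/
noncomputable def Ih {K : Type*} [Field K] (h s : PowerSeries K) : PowerSeries K :=
  PowerSeries.mk fun k =>
    if k = 0 then 0 else PowerSeries.coeff (k - 1) s / PowerSeries.coeff k h

/-- The order `ω(f)` of a nonzero formal power series: the least `n` with `fₙ ≠ 0`. -/
noncomputable def worder {K : Type*} [Field K] (f : PowerSeries K) : ℕ :=
  sInf {n | PowerSeries.coeff n f ≠ 0}

/-- The distance `d(f,g) = 2^{-ω(f-g)}`, with `d(f,f) = 0`. -/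
noncomputable def wdist {K : Type*} [Field K] (f g : PowerSeries K) : ℝ :=
  if f = g then 0 else (2 : ℝ) ^ (-(worder (f - g) : ℤ))

/-! Non-expansiveness of `T` means that the first `n` coefficients of `T f` depend only on the
first `n` coefficients of `f`, and `I_h` shifts coefficients up by one. Hence
`Φ z = y₀ + I_h(q) + I_h(T z)` determines `n + 1` coefficients of its value from `n`
coefficients of its argument, so it has a unique fixed point `y`, which agrees with `Φⁿ(0)`
below degree `n`; and `Φⁿ(0)` is the `n`-th partial sum of the geometric series applied to
`y₀ + I_h(q)`. Since every `hₖ ≠ 0`, `D_h y = p, y(0) = c` is equivalent to `y = c + I_h(p)`,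
so the fixed points of `Φ` are exactly the solutions of the IVP. -/

namespace PowerSeries

variable {R : Type*} [Semiring R]

theorem trunc_eq_trunc_iff {n : ℕ} {f g : R⟦X⟧} :
    trunc n f = trunc n g ↔ ∀ i < n, coeff i f = coeff i g := by
  simp only [Polynomial.ext_iff, coeff_trunc]
  refine ⟨fun H i hi => by simpa [hi] using H i, fun H i => ?_⟩
  split_ifs with hi
  exacts [H i hi, rfl]

/-- `Φ` is a `1/2`-contraction for the `X`-adic ultrametric. -/
def TruncContracting (Φ : R⟦X⟧ → R⟦X⟧) : Prop :=
  ∀ n f g, trunc n f = trunc n g → trunc (n + 1) (Φ f) = trunc (n + 1) (Φ g)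

variable {Φ : R⟦X⟧ → R⟦X⟧}

theorem TruncContracting.trunc_iterate_eq (hΦ : TruncContracting Φ) (n : ℕ) (f g : R⟦X⟧) :
    trunc n (Φ^[n] f) = trunc n (Φ^[n] g) := by
  induction n with
  | zero => rfl
  | succ n ih => simpa only [Function.iterate_succ_apply'] using hΦ n _ _ ih

theorem TruncContracting.exists_fixedPoint (hΦ : TruncContracting Φ) : ∃ y, Φ y = y := by
  set y := mk fun n => coeff n (Φ^[n + 1] 0)
  have hy : ∀ n, trunc n (Φ^[n] 0) = trunc n y := fun n => trunc_eq_trunc_iff.2 fun i hi => by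
    obtain ⟨m, rfl⟩ := Nat.exists_eq_add_of_lt hi
    have := trunc_eq_trunc_iff.1 (hΦ.trunc_iterate_eq (i + 1) (Φ^[m] 0) 0) i i.lt_succ_self
    rw [← Function.iterate_add_apply, show i + 1 + m = i + m + 1 by omega] at this
    exact this.trans (coeff_mk i fun n => coeff n (Φ^[n + 1] 0)).symm
  refine ⟨y, ext fun n => ?_⟩
  have := trunc_eq_trunc_iff.1 (hΦ n _ _ (hy n)) n n.lt_succ_self
  rw [← this, ← Function.iterate_succ_apply' Φ, coeff_mk]

theorem TruncContracting.trunc_iterate_eq_of_isFixedPt (hΦ : TruncContracting Φ) {y : R⟦X⟧}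
    (hy : Φ y = y) (n : ℕ) (f : R⟦X⟧) : trunc n (Φ^[n] f) = trunc n y := by
  rw [hΦ.trunc_iterate_eq n f y, Function.iterate_fixed hy]

theorem TruncContracting.eq_of_isFixedPt (hΦ : TruncContracting Φ) {y z : R⟦X⟧}
    (hy : Φ y = y) (hz : Φ z = z) : z = y :=
  ext fun n => by
    have := hΦ.trunc_iterate_eq_of_isFixedPt hy (n + 1) z
    rw [Function.iterate_fixed hz] at this
    exact trunc_eq_trunc_iff.1 this n n.lt_succ_self

end PowerSeries

theorem sum_range_iterate_eq_iterate_affine {M F : Type*} [AddCommMonoid M] [FunLike F M M]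
    [AddMonoidHomClass F M M] (L : F) (w : M) (n : ℕ) :
    ∑ k ∈ range n, (⇑L)^[k] w = (fun z => w + L z)^[n] 0 := by
  induction n with
  | zero => rfl
  | succ n ih =>
    simp only [sum_range_succ', Function.iterate_succ_apply', Function.iterate_zero_apply,
      ← ih, map_sum]
    exact add_comm _ _

section Field

variable {K : Type*} [Field K]

theorem wdist_le_two_zpow_iff {f g : K⟦X⟧} {n : ℕ} :
    wdist f g ≤ (2 : ℝ) ^ (-(n : ℤ)) ↔ trunc n f = trunc n g := by
  rw [trunc_eq_trunc_iff]
  by_cases hfg : f = g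
  · simp [hfg, wdist]
  obtain ⟨m, hm⟩ : ∃ m, coeff m (f - g) ≠ 0 := by
    by_contra! H
    exact hfg (sub_eq_zero.1 (PowerSeries.ext H))
  rw [wdist, if_neg hfg, zpow_le_zpow_iff_right₀ (by norm_num : (1 : ℝ) < 2), neg_le_neg_iff,
    Int.ofNat_le, worder, le_csInf_iff' ⟨m, hm⟩]
  refine ⟨fun H i hi => ?_, fun H m hm => ?_⟩
  · by_contra hc
    exact absurd (H (by simpa [sub_eq_zero] using hc)) (by omega)
  · by_contra hlt
    exact hm (by rw [map_sub, H m (by omega), sub_self])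

theorem exists_forall_ge_wdist_lt {u : ℕ → K⟦X⟧} {y : K⟦X⟧}
    (hu : ∀ n, trunc n (u n) = trunc n y) {ε : ℝ} (hε : 0 < ε) :
    ∃ N, ∀ n ≥ N, wdist (u n) y < ε := by
  obtain ⟨N, hN⟩ := exists_pow_lt_of_lt_one hε (by norm_num : (2⁻¹ : ℝ) < 1)
  refine ⟨N, fun n hn => ?_⟩
  calc wdist (u n) y ≤ (2 : ℝ) ^ (-(n : ℤ)) := wdist_le_two_zpow_iff.2 (hu n)
    _ ≤ (2 : ℝ) ^ (-(N : ℤ)) := zpow_le_zpow_right₀ (by norm_num) (by omega)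
    _ = 2⁻¹ ^ N := by rw [zpow_neg, zpow_natCast, inv_pow]
    _ < ε := hN

variable (h : K⟦X⟧)

@[simp]
theorem constantCoeff_Ih (f : K⟦X⟧) : constantCoeff (Ih h f) = 0 := by
  simp [Ih, ← coeff_zero_eq_constantCoeff_apply]

@[simp]
theorem coeff_succ_Ih (f : K⟦X⟧) (k : ℕ) :
    coeff (k + 1) (Ih h f) = coeff k f / coeff (k + 1) h := by
  simp [Ih]

noncomputable def IhLinear : Module.End K K⟦X⟧ where
  toFun := Ih h
  map_add' f g := ext fun k => by cases k <;> simp [add_div]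
  map_smul' c f := ext fun k => by cases k <;> simp [mul_div_assoc]

theorem IhLinear_apply (f : K⟦X⟧) : IhLinear h f = Ih h f := rfl

theorem trunc_succ_Ih_eq {n : ℕ} {f g : K⟦X⟧} (hfg : trunc n f = trunc n g) :
    trunc (n + 1) (Ih h f) = trunc (n + 1) (Ih h g) := by
  rw [trunc_eq_trunc_iff] at hfg ⊢
  rintro (_ | i) hi
  · simp
  · simp [hfg i (by omega)]

theorem Dh_eq_and_constantCoeff_eq_iff (hh : ∀ k, coeff (k + 1) h ≠ 0) (y p : K⟦X⟧) (c : K) :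
    Dh h y = p ∧ constantCoeff y = c ↔ y = C c + Ih h p := by
  constructor
  · rintro ⟨rfl, rfl⟩
    ext (_ | k)
    · simp
    · simp [Dh, mul_div_cancel_left₀ _ (hh k)]
  · rintro rfl
    refine ⟨ext fun k => ?_, by simp⟩
    simp [Dh, mul_div_cancel₀ _ (hh k)]

end Field

theorem ivp_linear_geometric_series_general {K : Type*} [Field K]
    (h : PowerSeries K)
    (hne : ∀ k : ℕ, 1 ≤ k → PowerSeries.coeff k h ≠ 0)
    (T : Module.End K (PowerSeries K))
    (hT : ∀ f g : PowerSeries K, wdist (T f) (T g) ≤ wdist f g)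
    (q : PowerSeries K) (y₀ : K) :
    ∃ y : PowerSeries K,
      (Dh h y = T y + q ∧ PowerSeries.constantCoeff y = y₀) ∧
      (∀ z : PowerSeries K,
        (Dh h z = T z + q ∧ PowerSeries.constantCoeff z = y₀) → z = y) ∧
      (∀ ε : ℝ, 0 < ε → ∃ N : ℕ, ∀ n ≥ N,
        wdist (∑ k ∈ Finset.range n,
            (fun z => Ih h (T z))^[k] (PowerSeries.C y₀ + Ih h q)) y < ε) := by
  set L := IhLinear h * T
  set w := C y₀ + Ih h q
  have hsol : ∀ z, (Dh h z = T z + q ∧ constantCoeff z = y₀) ↔ w + L z = z := fun z => by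
    rw [Dh_eq_and_constantCoeff_eq_iff h (fun k => hne _ k.succ_pos), ← IhLinear_apply, map_add,
      eq_comm, add_comm (IhLinear h _), ← add_assoc]
    rfl
  have hT_trunc : ∀ n f g, trunc n f = trunc n g → trunc n (T f) = trunc n (T g) :=
    fun n f g hfg => wdist_le_two_zpow_iff.1 ((hT f g).trans (wdist_le_two_zpow_iff.2 hfg))
  have hΦ : TruncContracting fun z => w + L z := fun n f g hfg => by
    rw [map_add, map_add (trunc (n + 1)) w]
    exact congrArg _ (trunc_succ_Ih_eq h (hT_trunc n f g hfg))
  obtain ⟨y, hy⟩ := hΦ.exists_fixedPoint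
  refine ⟨y, (hsol y).2 hy, fun z hz => hΦ.eq_of_isFixedPt hy ((hsol z).1 hz), fun ε hε => ?_⟩
  refine exists_forall_ge_wdist_lt (fun n => ?_) hε
  rw [show (fun z => Ih h (T z)) = ⇑L from rfl, sum_range_iterate_eq_iterate_affine]
  exact hΦ.trunc_iterate_eq_of_isFixedPt hy n 0

/-- Let `T` be a non-expansive `K`-linear endomorphism of `K[[x]]`,
`q ∈ K[[x]]`, `y₀ ∈ K`. The IVP `D_h(y) = T(y) + q`, `y(0) = y₀` has a unique solution,
namely `y = (Σ_{n≥0} (I_h ∘ T)ⁿ)(y₀ + I_h(q))`: the partial sums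
`Σ_{k<n} (I_h ∘ T)ᵏ (y₀ + I_h(q))` converge to `y` in the ultrametric `d`
(the geometric operator series converges since `I_h ∘ T` is `1/2`-contractive). -/
theorem ivp_linear_geometric_series {K : Type*} [Field K] [CharZero K]
    (h : PowerSeries K)
    (h0 : PowerSeries.constantCoeff h = 0)
    (hne : ∀ k : ℕ, 1 ≤ k → PowerSeries.coeff k h ≠ 0)
    (T : Module.End K (PowerSeries K))
    (hT : ∀ f g : PowerSeries K, wdist (T f) (T g) ≤ wdist f g)
    (q : PowerSeries K) (y₀ : K) :
    ∃ y : PowerSeries K,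
      (Dh h y = T y + q ∧ PowerSeries.constantCoeff y = y₀) ∧
      (∀ z : PowerSeries K,
        (Dh h z = T z + q ∧ PowerSeries.constantCoeff z = y₀) → z = y) ∧
      (∀ ε : ℝ, 0 < ε → ∃ N : ℕ, ∀ n ≥ N,
        wdist (∑ k ∈ Finset.range n,
            (fun z => Ih h (T z))^[k] (PowerSeries.C y₀ + Ih h q)) y < ε) :=
  ivp_linear_geometric_series_general h hne T hT q y₀
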